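/- Let k and n be positive integers, set d = h = 2^k and m = n·2^k, take c = 1 and U0 = 0, and let α, β ∈ ℝ^h be nonnegative. Define W' = {(V, U) : V ∈ ℝ^{1×h}, U ∈ ℝ^{h×d}, |V_j| ≤ α_j and ‖u_j‖₂ ≤ β_j for all j ∈ [h], and ‖U‖₂ ≤ max_j β_j}, and F_{W'} = {x ↦ V[Ux]_+ : (V,U) ∈ W'}. Then there exists a sample S = {x_1,…,x_m} ⊂ ℝ^d in which each x_i is a standard basis vector of ℝ^d (with each basis vector appearing exactly n times) such that E_ξ [ sup_{f ∈ F_{W'}} Σ_{i=1}^m ξ_i f(x_i) ] ≥ (Σ_{j=1}^h α_j β_j) √(2m) / 8, where ξ is uniform on {±1}^m; in particular the empirical Rademacher complexity satisfies R_S(F_{W'}) ≥ (Σ_{j=1}^h α_j β_j) √(2m) / (8m). -/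

import Mathlib

noncomputable section

open Finset

/-- Euclidean norm of a finite-dimensional real vector. -/
def euclNorm {n : ℕ} (x : Fin n → ℝ) : ℝ := Real.sqrt (∑ i, (x i) ^ 2)

/-- ReLU activation. -/
def relu (t : ℝ) : ℝ := max t 0

/-- Two layer ReLU network with scalar output, `x ↦ V [U x]₊`. -/
def netS {d h : ℕ} (V : Fin h → ℝ) (U : Matrix (Fin h) (Fin d) ℝ)
    (x : Fin d → ℝ) : ℝ :=
  ∑ j, V j * relu (∑ k, U j k * x k)

/-- Spectral norm (ℓ₂ operator norm) of a real matrix. -/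
def specNorm {a b : ℕ} (M : Matrix (Fin a) (Fin b) ℝ) : ℝ :=
  ⨆ v : {v : Fin b → ℝ // euclNorm v ≤ 1}, euclNorm (M.mulVec v.val)

/-- Sign associated to a boolean: `±1`. -/
def sg (b : Bool) : ℝ := if b then 1 else -1

/-!
Sample the basis vectors cyclically, `x i = e (i mod h)`. A Rademacher sum `∑ i, ξ i f (x i)`
is then `∑ j, s j f (e j)`, where `s j` is the sum of the `n` signs on the copies of `e j`.

For fixed signs, take a Hadamard matrix `H` of order `h` (Sylvester's, `h = 2 ^ k`) and let row `a`
of the network be `x ↦ ± α a [(β a / √h) ⟪± H a, x⟫]₊`, with the columns restricted to one sign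
of `s`. Choosing the two signs by pigeonhole over the four sign classes of `(s j, H a j)` makes
row `a` collect `α a β a / √h` times a quarter of `∑ j, |s j|`; the rows of `H` are orthogonal, so
the spectral norm stays at most `max β`.

Averaging over the signs, `E |s j| ≥ √(n / 2)` (Szarek's sharp constant in Khintchine's
inequality for `p = 1`). It follows from `E |S (2q+1)| ≥ E |S (2q)| + C(2q, q) / 4 ^ q` for sums `S`
of Rademacher signs and `C(2q, q) ≥ 4 ^ q / (2 √q)`. Altogether the expected supremum is at least
`(∑ α β) h √(n / 2) / (4 √h) = (∑ α β) √(2 m) / 8`.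
-/

open Matrix

def sumAbsSignSum (c : ℕ) : ℝ := ∑ f : Fin c → Bool, |∑ l, sg (f l)|

lemma two_mul_sumAbsSignSum_add_le (c : ℕ) :
    2 * sumAbsSignSum c + 2 * #{f : Fin c → Bool | ∑ l, sg (f l) = 0}
      ≤ sumAbsSignSum (c + 1) := by
  have hstep (S : ℝ) : 2 * |S| + 2 * (if S = 0 then 1 else 0) ≤ |1 + S| + |-1 + S| := by
    split_ifs with hS
    · norm_num [hS]
    · have htri := abs_add_le (1 + S) (-1 + S)
      rw [show 1 + S + (-1 + S) = 2 * S by ring, abs_mul, abs_two] at htri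
      linarith
  have hcons : sumAbsSignSum (c + 1)
      = ∑ f : Fin c → Bool, (|1 + ∑ l, sg (f l)| + |-1 + ∑ l, sg (f l)|) := by
    rw [sumAbsSignSum, ← (Fin.consEquiv fun _ => Bool).sum_comp, Fintype.sum_prod_type,
      Fintype.sum_bool, ← sum_add_distrib]
    simp [Fin.sum_univ_succ, sg]
  rw [hcons, sumAbsSignSum, natCast_card_filter, mul_sum, mul_sum, ← sum_add_distrib]
  exact sum_le_sum fun f _ => hstep _

lemma centralBinom_le_card_sum_sg_eq_zero (q : ℕ) :
    (q.centralBinom : ℝ) ≤ #{f : Fin (2 * q) → Bool | ∑ l, sg (f l) = 0} := by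
  have hcard : #(powersetCard q (univ : Finset (Fin (2 * q)))) = q.centralBinom := by
    simp [Nat.centralBinom_eq_two_mul_choose]
  rw [← hcard, Nat.cast_le]
  refine card_le_card_of_injOn (fun s l => decide (l ∈ s)) (fun s hs => ?_)
    (fun s _ t _ hst => ?_)
  · have hsg (l : Fin (2 * q)) : sg (decide (l ∈ s)) = 2 * (if l ∈ s then 1 else 0) - 1 := by
      by_cases hl : l ∈ s <;> norm_num [sg, hl]
    rw [mem_coe, mem_powersetCard_univ] at hs
    simp [hsg, sum_sub_distrib, hs, mul_comm]
  · ext l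
    simpa using congrFun hst l

lemma sixteen_pow_le_four_mul_mul_centralBinom_sq {q : ℕ} (hq : 0 < q) :
    16 ^ q ≤ 4 * q * q.centralBinom ^ 2 := by
  induction q, hq using Nat.le_induction with
  | base => simp [Nat.centralBinom, Nat.choose]
  | succ q hq ih =>
    refine Nat.le_of_mul_le_mul_left ?_ (show 0 < (q + 1) ^ 2 by positivity)
    calc (q + 1) ^ 2 * 16 ^ (q + 1) = (q + 1) ^ 2 * 16 * 16 ^ q := by ring
      _ ≤ (q + 1) ^ 2 * 16 * (4 * q * q.centralBinom ^ 2) := Nat.mul_le_mul_left _ ih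
      _ ≤ 4 * (q + 1) * (2 * (2 * q + 1) * q.centralBinom) ^ 2 := by
          have : (q + 1) * (4 * q) ≤ (2 * q + 1) ^ 2 := by nlinarith
          nlinarith [Nat.zero_le (q.centralBinom ^ 2)]
      _ = (q + 1) ^ 2 * (4 * (q + 1) * (q + 1).centralBinom ^ 2) := by
          rw [← Nat.succ_mul_centralBinom_succ]; ring

lemma four_pow_le_two_mul_sqrt_mul_centralBinom {q : ℕ} (hq : 0 < q) :
    (4 : ℝ) ^ q ≤ 2 * √q * q.centralBinom := by
  have h16 : (16 : ℝ) ^ q ≤ 4 * q * q.centralBinom ^ 2 := by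
    exact_mod_cast sixteen_pow_le_four_mul_mul_centralBinom_sq hq
  refine le_of_pow_le_pow_left₀ two_ne_zero (by positivity) ?_
  calc ((4 : ℝ) ^ q) ^ 2 = 16 ^ q := by rw [← pow_mul, mul_comm, pow_mul]; norm_num
    _ ≤ 4 * q * q.centralBinom ^ 2 := h16
    _ = (2 * √q * q.centralBinom) ^ 2 := by
        rw [mul_pow, mul_pow, Real.sq_sqrt q.cast_nonneg]; ring

lemma four_pow_mul_sqrt_succ_le (q : ℕ) :
    (4 : ℝ) ^ q * √(q + 1) ≤ 4 ^ q * √q + q.centralBinom := by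
  rcases Nat.eq_zero_or_pos q with rfl | hq
  · simp
  set s := √(q : ℝ)
  set t := √(q + 1 : ℝ)
  have hs : 0 < s := by positivity
  have hst : s ≤ t := Real.sqrt_le_sqrt (by linarith)
  have hgap : 0 ≤ 4 ^ q * (t - s) := mul_nonneg (by positivity) (by linarith)
  -- `t - s = 1 / (t + s) ≤ 1 / (2 s)`, and `4 ^ q / (2 s) ≤ centralBinom q`
  have hdiff : 4 ^ q * (t - s) * (t + s) = 4 ^ q := by
    rw [show 4 ^ q * (t - s) * (t + s) = (4 : ℝ) ^ q * (t ^ 2 - s ^ 2) by ring,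
      Real.sq_sqrt (by positivity), Real.sq_sqrt (by positivity)]
    ring
  have hC := four_pow_le_two_mul_sqrt_mul_centralBinom hq
  have hmul : 2 * s * (4 ^ q * (t - s)) ≤ 2 * s * q.centralBinom := by nlinarith
  linarith [le_of_mul_le_mul_left hmul (by positivity)]

lemma two_mul_sumAbsSignSum_le_succ (c : ℕ) : 2 * sumAbsSignSum c ≤ sumAbsSignSum (c + 1) := by
  linarith [two_mul_sumAbsSignSum_add_le c,
    (#{f : Fin c → Bool | ∑ l, sg (f l) = 0}).cast_nonneg (α := ℝ)]

lemma two_mul_sumAbsSignSum_add_centralBinom_le (q : ℕ) :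
    2 * sumAbsSignSum (2 * q) + 2 * q.centralBinom ≤ sumAbsSignSum (2 * q + 1) := by
  linarith [two_mul_sumAbsSignSum_add_le (2 * q), centralBinom_le_card_sum_sg_eq_zero q]

lemma four_pow_mul_sqrt_le_sumAbsSignSum (q : ℕ) : 4 ^ q * √q ≤ sumAbsSignSum (2 * q) := by
  induction q with
  | zero => simp [sumAbsSignSum]
  | succ q ih =>
    push_cast
    calc (4 : ℝ) ^ (q + 1) * √(q + 1) ≤ 4 * (4 ^ q * √q + q.centralBinom) := by
          rw [pow_succ']; nlinarith [four_pow_mul_sqrt_succ_le q]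
      _ ≤ 2 * sumAbsSignSum (2 * q + 1) := by
          linarith [two_mul_sumAbsSignSum_add_centralBinom_le q]
      _ ≤ sumAbsSignSum (2 * (q + 1)) := two_mul_sumAbsSignSum_le_succ _

lemma two_pow_mul_sqrt_half_le_sumAbsSignSum (c : ℕ) :
    2 ^ c * √(c / 2) ≤ sumAbsSignSum c := by
  obtain ⟨q, rfl | rfl⟩ := Nat.even_or_odd' c
  · have h := four_pow_mul_sqrt_le_sumAbsSignSum q
    norm_num [pow_mul] at h ⊢
    exact h
  · calc (2 : ℝ) ^ (2 * q + 1) * √((2 * q + 1 : ℕ) / 2) ≤ 2 * (4 ^ q * √(q + 1)) := by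
          rw [pow_succ, pow_mul, mul_comm _ (2 : ℝ), mul_assoc]
          gcongr
          · norm_num
          · push_cast; linarith
      _ ≤ 2 * (4 ^ q * √q + q.centralBinom) := by gcongr; exact four_pow_mul_sqrt_succ_le q
      _ ≤ _ := by
          linarith [two_mul_sumAbsSignSum_add_centralBinom_le q,
            four_pow_mul_sqrt_le_sumAbsSignSum q]

namespace Matrix

variable {n : Type*} [Fintype n] [DecidableEq n] {H : Matrix n n ℝ}

lemma IsHadamard.abs_apply (hH : H.IsHadamard) (i j : n) : |H i j| = 1 := by
  rcases Unitary.mem_iff_eq_one_or_eq_neg_one.mp (hH.apply_mem i j) with h | h <;> simp [h]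

lemma IsHadamard.sum_mulVec_sq (hH : H.IsHadamard) (v : n → ℝ) :
    ∑ i, (H *ᵥ v) i ^ 2 = Fintype.card n * ∑ j, v j ^ 2 := by
  have h := hH.conjTranspose_mul
  rw [conjTranspose_eq_transpose_of_trivial] at h
  calc ∑ i, (H *ᵥ v) i ^ 2 = (H *ᵥ v) ⬝ᵥ (H *ᵥ v) := by simp [dotProduct, sq]
    _ = ((Hᵀ * H) *ᵥ v) ⬝ᵥ v := by
      rw [dotProduct_mulVec, ← mulVec_transpose, mulVec_mulVec]
    _ = _ := by simp [h, smul_mulVec, dotProduct, sq, mul_sum, mul_assoc]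

lemma IsHadamard.sum_mulVec_sq_le_of_masked {κ : Type*} [Fintype κ] [DecidableEq κ]
    (hH : H.IsHadamard) {M : Matrix n n ℝ} {c : n → ℝ} {B : ℝ} (g f : n → κ)
    (hM : ∀ a j, M a j = c a * if g j = f a then H a j else 0)
    (hc : ∀ a, Fintype.card n * c a ^ 2 ≤ B ^ 2) (v : n → ℝ) :
    ∑ a, (M *ᵥ v) a ^ 2 ≤ B ^ 2 * ∑ j, v j ^ 2 := by
  rcases isEmpty_or_nonempty n with hn | hn
  · simp
  set w : κ → n → ℝ := fun t j => if g j = t then v j else 0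
  have hrow (a : n) : (M *ᵥ v) a = c a * (H *ᵥ w (f a)) a := by
    simp [mulVec, dotProduct, hM, w, mul_sum, mul_assoc]
  have hsplit (j : n) : ∑ t, w t j ^ 2 = v j ^ 2 := by simp [w, apply_ite (· ^ 2)]
  refine le_of_mul_le_mul_left ?_ (Nat.cast_pos.mpr (Fintype.card_pos (α := n)))
  calc (Fintype.card n : ℝ) * ∑ a, (M *ᵥ v) a ^ 2 ≤ ∑ a, B ^ 2 * ∑ t, (H *ᵥ w t) a ^ 2 := by
        rw [mul_sum]
        refine sum_le_sum fun a _ => ?_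
        rw [hrow, mul_pow, ← mul_assoc]
        exact mul_le_mul (hc a) (single_le_sum (f := fun t => (H *ᵥ w t) a ^ 2)
          (fun _ _ => sq_nonneg _) (mem_univ _)) (sq_nonneg _) (by positivity)
    _ = Fintype.card n * (B ^ 2 * ∑ j, v j ^ 2) := by
        simp_rw [← mul_sum, sum_comm (s := univ (α := n)), hH.sum_mulVec_sq, ← mul_sum,
          sum_comm (s := univ (α := κ)), hsplit]
        ring

lemma isHadamard_two : (!![1, 1; 1, -1] : Matrix (Fin 2) (Fin 2) ℝ).IsHadamard := by
  refine ⟨fun i j => ?_, ?_, ?_⟩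
  · fin_cases i <;> fin_cases j <;> simp [Unitary.mem_iff_eq_one_or_eq_neg_one]
  all_goals
    ext i j; fin_cases i <;> fin_cases j <;> norm_num [mul_apply, Fin.sum_univ_two]

lemma exists_isHadamard_two_pow (k : ℕ) :
    ∃ H : Matrix (Fin (2 ^ k)) (Fin (2 ^ k)) ℝ, H.IsHadamard := by
  induction k with
  | zero =>
    rw [pow_zero]
    refine ⟨(1 : Matrix (Fin 1) (Fin 1) ℝ), fun i j => ?_, by simp, by simp⟩
    rw [Subsingleton.elim i j, one_apply_eq]
    exact one_mem _
  | succ k ih =>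
    obtain ⟨H, hH⟩ := ih
    let e : Fin 2 × Fin (2 ^ k) ≃ Fin (2 ^ (k + 1)) :=
      finProdFinEquiv.trans (finCongr (pow_succ' 2 k).symm)
    exact ⟨reindex e e (kroneckerMap (· * ·) !![1, 1; 1, -1] H),
      (isHadamard_two.kronecker hH).reindex e e⟩

end Matrix

lemma specNorm_le {a b : ℕ} {M : Matrix (Fin a) (Fin b) ℝ} {B : ℝ} (hB : 0 ≤ B)
    (hM : ∀ v, ∑ i, (M *ᵥ v) i ^ 2 ≤ B ^ 2 * ∑ j, v j ^ 2) : specNorm M ≤ B := by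
  have : Nonempty {v : Fin b → ℝ // euclNorm v ≤ 1} := ⟨⟨0, by simp [euclNorm]⟩⟩
  refine ciSup_le fun ⟨v, hv⟩ => ?_
  calc euclNorm (M *ᵥ v) ≤ √(B ^ 2 * ∑ j, v j ^ 2) := Real.sqrt_le_sqrt (hM v)
    _ = B * euclNorm v := by rw [Real.sqrt_mul (sq_nonneg B), Real.sqrt_sq hB, euclNorm]
    _ ≤ B := mul_le_of_le_one_right hB hv

lemma euclNorm_le_sqrt_mul {n : ℕ} {x : Fin n → ℝ} {r : ℝ} (hr : 0 ≤ r) (hx : ∀ j, |x j| ≤ r) :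
    euclNorm x ≤ √n * r := by
  calc euclNorm x ≤ √(∑ _j : Fin n, r ^ 2) :=
        Real.sqrt_le_sqrt (sum_le_sum fun j _ => sq_le_sq.mpr ((hx j).trans (le_abs_self r)))
    _ = √n * r := by simp [Real.sqrt_sq hr]

lemma abs_le_euclNorm {n : ℕ} (x : Fin n → ℝ) (j : Fin n) : |x j| ≤ euclNorm x :=
  Real.abs_le_sqrt (single_le_sum (f := fun i => x i ^ 2) (fun _ _ => sq_nonneg _) (mem_univ j))

lemma abs_relu_le (x : ℝ) : |relu x| ≤ |x| := by
  rcases le_total x 0 with hx | hx <;> simp [relu, hx, abs_nonneg]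

lemma relu_mul_of_nonneg {c : ℝ} (hc : 0 ≤ c) (x : ℝ) : relu (c * x) = c * relu x := by
  simp [relu, mul_max_of_nonneg _ _ hc]

lemma relu_sg_mul (q : Bool) (y : ℝ) :
    relu (sg q * y) = if decide (0 < y) = q then |y| else 0 := by
  rcases lt_or_ge 0 y with hy | hy
  · cases q <;> simp [relu, sg, hy, hy.le, abs_of_pos]
  · cases q <;> simp [relu, sg, hy, abs_of_nonpos]

lemma sg_decide_pos_mul (x : ℝ) : sg (decide (0 < x)) * x = |x| := by
  rcases lt_or_ge 0 x with hx | hx <;> simp [sg, hx, abs_of_pos, abs_of_nonpos]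

lemma abs_sg (b : Bool) : |sg b| = 1 := by cases b <;> simp [sg]

lemma netS_single_one {d h : ℕ} (V : Fin h → ℝ) (U : Matrix (Fin h) (Fin d) ℝ) (j : Fin d) :
    netS V U (Pi.single j 1) = ∑ a, V a * relu (U a j) := by
  simp [netS, Pi.single_apply]

lemma mul_sg_mul_relu_masked {x y c α : ℝ} (hc : 0 ≤ c) (p q : Bool) :
    x * (sg p * α * relu (c * sg q * if decide (0 < x) = p then y else 0))
      = α * c * if (decide (0 < x), decide (0 < y)) = (p, q) then |x| * |y| else 0 := by
  by_cases hp : decide (0 < x) = p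
  · subst hp
    rw [if_pos rfl, mul_assoc c, relu_mul_of_nonneg hc, relu_sg_mul, ← sg_decide_pos_mul x]
    by_cases hq : decide (0 < y) = q <;> simp [hq]; ring
  · simp [hp, relu]

def boundedParams {d h : ℕ} (α β : Fin h → ℝ) : Set ((Fin h → ℝ) × Matrix (Fin h) (Fin d) ℝ) :=
  {p | (∀ j, |p.1 j| ≤ α j) ∧ (∀ j, euclNorm (p.2 j) ≤ β j) ∧ specNorm p.2 ≤ ⨆ j, β j}

lemma abs_netS_single_one_le {d h : ℕ} {α β : Fin h → ℝ}
    {p : (Fin h → ℝ) × Matrix (Fin h) (Fin d) ℝ} (hp : p ∈ boundedParams α β) (j : Fin d) :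
    |netS p.1 p.2 (Pi.single j 1)| ≤ ∑ a, α a * β a := by
  rw [netS_single_one]
  refine (abs_sum_le_sum_abs _ _).trans (sum_le_sum fun a _ => ?_)
  rw [abs_mul]
  exact mul_le_mul (hp.1 a) ((abs_relu_le _).trans ((abs_le_euclNorm _ _).trans (hp.2.1 a)))
    (abs_nonneg _) ((abs_nonneg _).trans (hp.1 a))

def maskedHadamardNet {h : ℕ} (H : Matrix (Fin h) (Fin h) ℝ) (α β s : Fin h → ℝ)
    (pq : Fin h → Bool × Bool) : (Fin h → ℝ) × Matrix (Fin h) (Fin h) ℝ :=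
  (fun a => sg (pq a).1 * α a,
    of fun a j => β a / √h * sg (pq a).2 * if decide (0 < s j) = (pq a).1 then H a j else 0)

section maskedHadamardNet

variable {h : ℕ} {H : Matrix (Fin h) (Fin h) ℝ} {α β : Fin h → ℝ}

lemma maskedHadamardNet_mem_boundedParams (hH : H.IsHadamard) (hα : ∀ j, 0 ≤ α j)
    (hβ : ∀ j, 0 ≤ β j) (s : Fin h → ℝ) (pq : Fin h → Bool × Bool) :
    maskedHadamardNet H α β s pq ∈ boundedParams α β := by
  have hc (a : Fin h) : h * (β a / √h * sg (pq a).2) ^ 2 = β a ^ 2 := by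
    have : (0 : ℝ) < h := by exact_mod_cast a.pos
    rw [mul_pow, div_pow, Real.sq_sqrt this.le, ← sq_abs (sg _), abs_sg]
    field_simp
  refine ⟨fun a => ?_, fun a => ?_, ?_⟩
  · simp [maskedHadamardNet, abs_mul, abs_sg, abs_of_nonneg (hα a)]
  · have hentry (j : Fin h) : |maskedHadamardNet H α β s pq |>.2 a j| ≤ β a / √h := by
      simp only [maskedHadamardNet, of_apply, abs_mul, abs_sg, mul_one,
        abs_of_nonneg (div_nonneg (hβ a) (Real.sqrt_nonneg _))]
      split_ifs <;> simp [hH.abs_apply, div_nonneg (hβ a) (Real.sqrt_nonneg _)]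
    calc euclNorm _ ≤ √h * (β a / √h) :=
          euclNorm_le_sqrt_mul (div_nonneg (hβ a) (Real.sqrt_nonneg _)) hentry
      _ = β a := mul_div_cancel₀ _ (Real.sqrt_ne_zero'.2 (by exact_mod_cast a.pos))
  · refine specNorm_le (Real.iSup_nonneg hβ) fun v =>
      hH.sum_mulVec_sq_le_of_masked _ _ (fun _ _ => rfl) (fun a => ?_) v
    rw [Fintype.card_fin, hc]
    exact pow_le_pow_left₀ (hβ a) (le_ciSup (Set.finite_range β).bddAbove a) 2

lemma sum_mul_netS_maskedHadamardNet (hH : H.IsHadamard) (hβ : ∀ j, 0 ≤ β j)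
    (s : Fin h → ℝ) (pq : Fin h → Bool × Bool) :
    ∑ j, s j * netS (maskedHadamardNet H α β s pq).1 (maskedHadamardNet H α β s pq).2
        (Pi.single j 1)
      = ∑ a, α a * (β a / √h)
          * ∑ j with (decide (0 < s j), decide (0 < H a j)) = pq a, |s j| := by
  simp only [netS_single_one, mul_sum]
  rw [sum_comm]
  refine sum_congr rfl fun a _ => ?_
  simp only [maskedHadamardNet, of_apply,
    mul_sg_mul_relu_masked (div_nonneg (hβ a) (Real.sqrt_nonneg _)), hH.abs_apply, mul_one,
    ← mul_sum, sum_filter]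

end maskedHadamardNet

theorem exists_mem_boundedParams_le_sum_mul_netS {h : ℕ} {H : Matrix (Fin h) (Fin h) ℝ}
    (hH : H.IsHadamard) {α β : Fin h → ℝ} (hα : ∀ j, 0 ≤ α j) (hβ : ∀ j, 0 ≤ β j)
    (s : Fin h → ℝ) :
    ∃ p ∈ boundedParams (d := h) α β,
      (∑ j, α j * β j) * (∑ j, |s j|) / (4 * √h) ≤ ∑ j, s j * netS p.1 p.2 (Pi.single j 1) := by
  have hclass (a : Fin h) : ∃ pq : Bool × Bool, (∑ j, |s j|) / 4
      ≤ ∑ j with (decide (0 < s j), decide (0 < H a j)) = pq, |s j| :=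
    Fintype.exists_le_sum_fiber_of_nsmul_le_sum _ (by simp [nsmul_eq_mul, mul_div_cancel₀])
  choose pq hpq using hclass
  refine ⟨_, maskedHadamardNet_mem_boundedParams hH hα hβ s pq, ?_⟩
  rw [sum_mul_netS_maskedHadamardNet hH hβ, sum_mul, sum_div]
  gcongr with a
  calc α a * β a * (∑ j, |s j|) / (4 * √h) = α a * (β a / √h) * ((∑ j, |s j|) / 4) := by ring
    _ ≤ _ := mul_le_mul_of_nonneg_left (hpq a)
      (mul_nonneg (hα a) (div_nonneg (hβ a) (Real.sqrt_nonneg _)))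

@[simp] lemma Fin.modNat_finProdFinEquiv {n h : ℕ} (l : Fin n) (j : Fin h) :
    (finProdFinEquiv (l, j)).modNat = j :=
  congrArg Prod.snd (finProdFinEquiv.symm_apply_apply (l, j))

@[simp] lemma Fin.divNat_finProdFinEquiv {n h : ℕ} (l : Fin n) (j : Fin h) :
    (finProdFinEquiv (l, j)).divNat = l :=
  congrArg Prod.fst (finProdFinEquiv.symm_apply_apply (l, j))

lemma sum_filter_modNat_eq {M : Type*} [AddCommMonoid M] {n h : ℕ} (j : Fin h)
    (f : Fin (n * h) → M) :
    ∑ i with i.modNat = j, f i = ∑ l : Fin n, f (finProdFinEquiv (l, j)) := by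
  rw [sum_filter, ← finProdFinEquiv.sum_comp, Fintype.sum_prod_type]
  simp

lemma card_filter_modNat_eq {n h : ℕ} (j : Fin h) : #{i : Fin (n * h) | i.modNat = j} = n := by
  rw [card_eq_sum_ones, sum_filter_modNat_eq]
  simp

def copySignSum {n h : ℕ} (b : Fin (n * h) → Bool) (j : Fin h) : ℝ :=
  ∑ i with i.modNat = j, sg (b i)

lemma sum_sg_mul_comp_modNat {n h : ℕ} (b : Fin (n * h) → Bool) (F : Fin h → ℝ) :
    ∑ i, sg (b i) * F i.modNat = ∑ j, copySignSum b j * F j := by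
  rw [← sum_fiberwise univ Fin.modNat]
  refine sum_congr rfl fun j _ => ?_
  rw [copySignSum, sum_mul]
  exact sum_congr rfl fun i hi => by rw [(mem_filter.mp hi).2]

lemma Fintype.sum_comp_eval {ι κ M : Type*} [Fintype ι] [DecidableEq ι] [Fintype κ]
    [AddCommMonoid M] (j : ι) (F : κ → M) :
    ∑ w : ι → κ, F (w j) = Fintype.card κ ^ (Fintype.card ι - 1) • ∑ x, F x := by
  rw [← (Equiv.funSplitAt j κ).symm.sum_comp, Fintype.sum_prod_type]
  simp [Fintype.card_subtype_compl, smul_sum]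

lemma sum_abs_copySignSum_eq {n h : ℕ} (j : Fin h) :
    ∑ b : Fin (n * h) → Bool, |copySignSum b j| = (2 ^ n) ^ (h - 1) * sumAbsSignSum n := by
  let e : (Fin h → Fin n → Bool) ≃ (Fin (n * h) → Bool) := (Equiv.piComm _).trans
    ((Equiv.curry _ _ _).symm.trans (finProdFinEquiv.arrowCongr (Equiv.refl Bool)))
  rw [← e.sum_comp]
  simp [e, copySignSum, sum_filter_modNat_eq, Function.swap, sumAbsSignSum,
    Fintype.sum_comp_eval j (fun f : Fin n → Bool => |∑ l, sg (f l)|)]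

lemma two_pow_mul_sqrt_half_le_sum_abs_copySignSum {n h : ℕ} (j : Fin h) :
    2 ^ (n * h) * √(n / 2) ≤ ∑ b : Fin (n * h) → Bool, |copySignSum b j| := by
  rw [sum_abs_copySignSum_eq, show (2 : ℝ) ^ (n * h) = (2 ^ n) ^ (h - 1) * 2 ^ n by
    rw [← pow_succ, ← pow_mul, Nat.sub_add_cancel j.pos], mul_assoc]
  gcongr
  exact two_pow_mul_sqrt_half_le_sumAbsSignSum n

lemma le_iSup_sum_sg_mul_netS {n h : ℕ} {H : Matrix (Fin h) (Fin h) ℝ} (hH : H.IsHadamard)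
    {α β : Fin h → ℝ} (hα : ∀ j, 0 ≤ α j) (hβ : ∀ j, 0 ≤ β j) (b : Fin (n * h) → Bool) :
    (∑ j, α j * β j) * (∑ j, |copySignSum b j|) / (4 * √h)
      ≤ ⨆ p : boundedParams (d := h) α β,
          ∑ i, sg (b i) * netS p.1.1 p.1.2 (Pi.single i.modNat 1) := by
  obtain ⟨p, hp, hle⟩ :=
    exists_mem_boundedParams_le_sum_mul_netS hH hα hβ (copySignSum b)
  have hbdd : BddAbove (Set.range fun p : boundedParams (d := h) α β =>
      ∑ i, sg (b i) * netS p.1.1 p.1.2 (Pi.single i.modNat 1)) := by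
    refine ⟨∑ _i : Fin (n * h), ∑ a, α a * β a,
      Set.forall_mem_range.2 fun p => sum_le_sum fun i _ => (le_abs_self _).trans ?_⟩
    rw [abs_mul, abs_sg, one_mul]
    exact abs_netS_single_one_le p.2 _
  refine le_ciSup_of_le hbdd ⟨p, hp⟩ ?_
  rw [sum_sg_mul_comp_modNat b fun j => netS p.1 p.2 (Pi.single j 1)]
  exact hle

theorem two_pow_mul_le_sum_iSup_sum_sg_mul_netS {n h : ℕ} {H : Matrix (Fin h) (Fin h) ℝ}
    (hH : H.IsHadamard) {α β : Fin h → ℝ} (hα : ∀ j, 0 ≤ α j) (hβ : ∀ j, 0 ≤ β j) :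
    2 ^ (n * h) * ((∑ j, α j * β j) * √(2 * (n * h)) / 8)
      ≤ ∑ b : Fin (n * h) → Bool, ⨆ p : boundedParams (d := h) α β,
          ∑ i, sg (b i) * netS p.1.1 p.1.2 (Pi.single i.modNat 1) := by
  set S := ∑ j, α j * β j
  have hS : 0 ≤ S := sum_nonneg fun j _ => mul_nonneg (hα j) (hβ j)
  have hsqrt : √(2 * (n * h) : ℝ) = 2 * (h / √h * √(n / 2)) := by
    rw [Real.div_sqrt, ← Real.sqrt_mul (Nat.cast_nonneg _),
      show (2 * (n * h) : ℝ) = 2 ^ 2 * (h * (n / 2)) by ring, Real.sqrt_mul (by positivity),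
      Real.sqrt_sq zero_le_two]
  calc 2 ^ (n * h) * (S * √(2 * (n * h)) / 8)
      = S / (4 * √h) * ∑ _j : Fin h, 2 ^ (n * h) * √(n / 2) := by
        rw [hsqrt, sum_const, card_univ, Fintype.card_fin, nsmul_eq_mul]; ring
    _ ≤ S / (4 * √h) * ∑ j, ∑ b : Fin (n * h) → Bool, |copySignSum b j| := by
        gcongr with j; exact two_pow_mul_sqrt_half_le_sum_abs_copySignSum j
    _ = ∑ b : Fin (n * h) → Bool, S * (∑ j, |copySignSum b j|) / (4 * √h) := by
        rw [sum_comm, mul_sum]; congr! 1 with b; ring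
    _ ≤ _ := sum_le_sum fun b _ => le_iSup_sum_sg_mul_netS hH hα hβ b

theorem rademacher_lower_bound_hadamard_general
    (k n : ℕ)
    (α β : Fin (2 ^ k) → ℝ) (hα : ∀ j, 0 ≤ α j) (hβ : ∀ j, 0 ≤ β j) :
    ∃ x : Fin (n * 2 ^ k) → Fin (2 ^ k) → ℝ,
      (∀ i, ∃ j, x i = Pi.single j 1) ∧
      (∀ j : Fin (2 ^ k),
        (Finset.univ.filter fun i => x i = Pi.single j 1).card = n) ∧
      (∑ b : Fin (n * 2 ^ k) → Bool,
          ⨆ p : {q : (Fin (2 ^ k) → ℝ) × Matrix (Fin (2 ^ k)) (Fin (2 ^ k)) ℝ //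
              (∀ j, |q.1 j| ≤ α j) ∧ (∀ j, euclNorm (q.2 j) ≤ β j) ∧
              specNorm q.2 ≤ ⨆ j, β j},
            ∑ i, sg (b i) * netS p.val.1 p.val.2 (x i)) / 2 ^ (n * 2 ^ k)
        ≥ (∑ j, α j * β j) * Real.sqrt (2 * (n * 2 ^ k)) / 8 ∧
      (1 / (n * 2 ^ k) : ℝ) *
        ((∑ b : Fin (n * 2 ^ k) → Bool,
          ⨆ p : {q : (Fin (2 ^ k) → ℝ) × Matrix (Fin (2 ^ k)) (Fin (2 ^ k)) ℝ //
              (∀ j, |q.1 j| ≤ α j) ∧ (∀ j, euclNorm (q.2 j) ≤ β j) ∧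
              specNorm q.2 ≤ ⨆ j, β j},
            ∑ i, sg (b i) * netS p.val.1 p.val.2 (x i)) / 2 ^ (n * 2 ^ k))
        ≥ (∑ j, α j * β j) * Real.sqrt (2 * (n * 2 ^ k)) / (8 * (n * 2 ^ k)) := by
  obtain ⟨H, hH⟩ := Matrix.exists_isHadamard_two_pow k
  have hsingle : Function.Injective fun j : Fin (2 ^ k) => (Pi.single j 1 : Fin (2 ^ k) → ℝ) :=
    fun i j hij => by simpa [Pi.single_apply] using congrFun hij i
  have hmain := two_pow_mul_le_sum_iSup_sum_sg_mul_netS (n := n) hH hα hβ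
  push_cast at hmain
  have hexp : (∑ j, α j * β j) * √(2 * (n * 2 ^ k)) / 8 ≤ (∑ b : Fin (n * 2 ^ k) → Bool,
      ⨆ p : boundedParams (d := 2 ^ k) α β,
        ∑ i, sg (b i) * netS p.1.1 p.1.2 (Pi.single i.modNat 1)) / 2 ^ (n * 2 ^ k) := by
    rw [le_div_iff₀ (by positivity), mul_comm]
    exact hmain
  refine ⟨fun i => Pi.single i.modNat 1, fun i => ⟨_, rfl⟩, fun j => ?_, hexp, ?_⟩
  · simpa [hsingle.eq_iff] using card_filter_modNat_eq j
  · calc (∑ j, α j * β j) * √(2 * (n * 2 ^ k)) / (8 * (n * 2 ^ k))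
        = 1 / (n * 2 ^ k) * ((∑ j, α j * β j) * √(2 * (n * 2 ^ k)) / 8) := by ring
      _ ≤ _ := mul_le_mul_of_nonneg_left hexp (by positivity)

/-- Rademacher complexity lower bound for the restricted class `F_{W'}`
on a sample made of standard basis vectors, each repeated `n` times
(`d = h = 2^k`, `m = n·2^k`, `c = 1`, `U0 = 0`). -/
theorem rademacher_lower_bound_hadamard
    (k n : ℕ) (hk : 0 < k) (hn : 0 < n)
    (α β : Fin (2 ^ k) → ℝ) (hα : ∀ j, 0 ≤ α j) (hβ : ∀ j, 0 ≤ β j) :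
    ∃ x : Fin (n * 2 ^ k) → Fin (2 ^ k) → ℝ,
      (∀ i, ∃ j, x i = Pi.single j 1) ∧
      (∀ j : Fin (2 ^ k),
        (Finset.univ.filter fun i => x i = Pi.single j 1).card = n) ∧
      (∑ b : Fin (n * 2 ^ k) → Bool,
          ⨆ p : {q : (Fin (2 ^ k) → ℝ) × Matrix (Fin (2 ^ k)) (Fin (2 ^ k)) ℝ //
              (∀ j, |q.1 j| ≤ α j) ∧ (∀ j, euclNorm (q.2 j) ≤ β j) ∧
              specNorm q.2 ≤ ⨆ j, β j},
            ∑ i, sg (b i) * netS p.val.1 p.val.2 (x i)) / 2 ^ (n * 2 ^ k)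
        ≥ (∑ j, α j * β j) * Real.sqrt (2 * (n * 2 ^ k)) / 8 ∧
      (1 / (n * 2 ^ k) : ℝ) *
        ((∑ b : Fin (n * 2 ^ k) → Bool,
          ⨆ p : {q : (Fin (2 ^ k) → ℝ) × Matrix (Fin (2 ^ k)) (Fin (2 ^ k)) ℝ //
              (∀ j, |q.1 j| ≤ α j) ∧ (∀ j, euclNorm (q.2 j) ≤ β j) ∧
              specNorm q.2 ≤ ⨆ j, β j},
            ∑ i, sg (b i) * netS p.val.1 p.val.2 (x i)) / 2 ^ (n * 2 ^ k))
        ≥ (∑ j, α j * β j) * Real.sqrt (2 * (n * 2 ^ k)) / (8 * (n * 2 ^ k)) :=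
  rademacher_lower_bound_hadamard_general k n α β hα hβ

end
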